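/- arXiv:2404.09528 — 2 statements merged into one kernel-verified Lean document; each statement's English description precedes it below -/
import Mathlib

section
/- Let d ≥ 1. Let e₀ = (0,…,0) ∈ ℝ^d, let e_i ∈ ℝ^d be the i-th standard basis vector for 1 ≤ i ≤ d, and let v* = (1/(4d), 1/d, …, 1/d) ∈ ℝ^d. For τ ≥ 0 define A₀ = {x ∈ [0,1]^d : ‖x − e₀‖ ≤ τ}, A₁ = [1/2, 1] × [0,1]^{d−1}, A_i = {x ∈ [0,1]^d : ‖x − e_i‖ ≤ τ} for 2 ≤ i ≤ d, and A_{d+1} = {x ∈ [0,1]^d : ‖x − v*‖ ≤ τ}. Then there exists τ* > 0 such that for every τ with 0 ≤ τ ≤ τ*, for every y ∈ A_{d+1} and every choice of z_i ∈ A_i for 0 ≤ i ≤ d, there exist nonnegative real numbers p₀, p₁, …, p_d summing to one with p₀z₀ + p₁z₁ + ⋯ + p_dz_d = y and p₁ ≥ 1/(16d). -/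
open Finset

noncomputable section

/-- The unit cube `[0,1]^d`. -/
def unitCube (d : ℕ) : Set (EuclideanSpace ℝ (Fin d)) :=
  {x | ∀ i, x i ∈ Set.Icc (0 : ℝ) 1}

/-- `eVec d 0 = 0`, and for `1 ≤ i ≤ d`, `eVec d i` is the `i`-th standard basis vector
(1-indexed) of `ℝ^d`. -/
def eVec (d : ℕ) (i : ℕ) : EuclideanSpace ℝ (Fin d) :=
  WithLp.toLp 2 (fun j : Fin d => if (j : ℕ) + 1 = i then (1 : ℝ) else 0)

/-- The distinguished point `v* = (1/(4d), 1/d, …, 1/d)`. -/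
def vstar (d : ℕ) : EuclideanSpace ℝ (Fin d) :=
  WithLp.toLp 2 (fun j : Fin d => if (j : ℕ) = 0 then (1 / (4 * d) : ℝ) else 1 / d)

/-- The regions `A₀, A₁, …, A_{d+1}` of Lemma 1 of Luo and Lim (2016):
`A₀ = {x ∈ [0,1]^d : ‖x − e₀‖ ≤ τ}`, `A₁ = [1/2,1] × [0,1]^{d−1}`,
`Aᵢ = {x ∈ [0,1]^d : ‖x − eᵢ‖ ≤ τ}` for `2 ≤ i ≤ d`, and
`A_{d+1} = {x ∈ [0,1]^d : ‖x − v*‖ ≤ τ}`. -/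
def Aset (d : ℕ) (τ : ℝ) (i : ℕ) : Set (EuclideanSpace ℝ (Fin d)) :=
  if i = 1 then {x ∈ unitCube d | ∀ j : Fin d, (j : ℕ) = 0 → 1 / 2 ≤ x j}
  else if i = d + 1 then {x ∈ unitCube d | ‖x - vstar d‖ ≤ τ}
  else {x ∈ unitCube d | ‖x - eVec d i‖ ≤ τ}

namespace LuoLimAux

lemma ar_lb (a c U : ℝ) (ha : 0 < a) (ha1 : a < 1) (hc : 0 ≤ c)
    (key : c ≤ (1 - a) * U) : c ≤ U ∧ 0 ≤ U := by
  have hU : 0 ≤ U := by nlinarith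
  constructor
  · nlinarith [mul_nonneg ha.le hU]
  · exact hU

lemma ar_u0u (ε τ U : ℝ) (hε : 0 < ε) (hε1 : ε ≤ 1) (hτ0 : 0 ≤ τ)
    (h1 : (1 - ε / 8) * U ≤ ε / 4 + τ - ε / 16) (h0 : 0 ≤ U) : U ≤ ε / 4 + 2 * τ := by
  nlinarith [sq_nonneg ε, mul_nonneg hτ0 hε.le]

lemma ar_usum (ε τ D S T : ℝ) (hε : 0 < ε) (hε1 : ε ≤ 1) (hτ0 : 0 ≤ τ) (hD : 1 ≤ D)
    (hDε : D * ε = 1) (h1 : (1 - ε / 8) * S = T) (h2 : T ≤ (D - 1) * (ε + τ)) (hS : 0 ≤ S) :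
    S ≤ 1 - 3 / 4 * ε + 2 * D * τ := by
  have h3 : T ≤ 1 - ε + D * τ := by nlinarith
  have hDτ : 0 ≤ D * τ := by nlinarith
  nlinarith [sq_nonneg ε, mul_nonneg hDτ hε.le]

lemma ar_tau (ε τ : ℝ) (hε : 0 < ε) (hε1 : ε ≤ 1) (hτε : τ ≤ ε ^ 2 / 64) : τ ≤ ε / 64 := by
  nlinarith [sq_nonneg ε]

lemma ar_su (ε τ s H0 W0 : ℝ) (hs0 : 0 ≤ s) (hsh : s * H0 = W0) (hH : 1 / 2 ≤ H0)
    (hW : W0 ≤ ε / 4 + 3 * τ) : s ≤ ε / 2 + 6 * τ := by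
  nlinarith [mul_nonneg hs0 (by linarith : (0:ℝ) ≤ 2 * H0 - 1)]

lemma ar_v (ε τ s Hj Wj Uj : ℝ) (hε : 0 < ε) (hε1 : ε ≤ 1) (hτ0 : 0 ≤ τ)
    (hτε : τ ≤ ε ^ 2 / 64) (hWU : Uj - τ ≤ Wj) (hUj : 7 / 8 * ε - τ ≤ Uj)
    (hHj0 : 0 ≤ Hj) (hHj1 : Hj ≤ 1) (hs0 : 0 ≤ s) (hsu : s ≤ ε / 2 + 6 * τ) :
    0 ≤ Wj - s * Hj := by
  have h1 : s * Hj ≤ s := by nlinarith [mul_nonneg hs0 (by linarith : (0:ℝ) ≤ 1 - Hj)]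
  have h2 : τ ≤ ε / 64 := ar_tau ε τ hε hε1 hτε
  nlinarith [sq_nonneg ε]

lemma ar_sv (ε τ D s SV SU : ℝ) (hε : 0 < ε) (hε1 : ε ≤ 1) (hτ0 : 0 ≤ τ)
    (hτε : τ ≤ ε ^ 2 / 64) (hD : 1 ≤ D) (hDε : D * ε = 1)
    (hsu : s ≤ ε / 2 + 6 * τ) (h1 : SV ≤ SU + (D - 1) * τ)
    (h2 : SU ≤ 1 - 3 / 4 * ε + 2 * D * τ) : s + SV ≤ 1 := by
  have hD0 : (0:ℝ) < D := by linarith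
  have hDτ : D * τ ≤ ε / 64 := by
    have := mul_le_mul_of_nonneg_left hτε hD0.le
    nlinarith [sq_nonneg ε]
  have hτD : τ ≤ D * τ := by nlinarith
  linarith

lemma ar_key0 (ε τ Y0 H0 : ℝ) (hε : 0 < ε) (hy : |Y0 - ε / 4| ≤ τ)
    (hH0 : 1 / 2 ≤ H0) (hH1 : H0 ≤ 1) :
    ε / 8 - τ ≤ Y0 - ε / 8 * H0 ∧ Y0 - ε / 8 * H0 ≤ ε / 4 + τ - ε / 16 := by
  have h := abs_le.1 hy
  constructor <;> nlinarith

lemma ar_keyj (ε τ Yj Hj : ℝ) (hε : 0 < ε) (hy : |Yj - ε| ≤ τ)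
    (hH0 : 0 ≤ Hj) (hH1 : Hj ≤ 1) :
    7 / 8 * ε - τ ≤ Yj - ε / 8 * Hj ∧ Yj - ε / 8 * Hj ≤ ε + τ := by
  have h := abs_le.1 hy
  constructor <;> nlinarith

lemma abs_coord_le {d : ℕ} (x : EuclideanSpace ℝ (Fin d)) (j : Fin d) : |x j| ≤ ‖x‖ := by
  rw [EuclideanSpace.norm_eq, ← Real.sqrt_sq_eq_abs]
  apply Real.sqrt_le_sqrt
  simp only [Real.norm_eq_abs, sq_abs]
  exact Finset.single_le_sum (f := fun i => x i ^ 2) (fun i _ => sq_nonneg _) (Finset.mem_univ j)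

lemma hull_perturb {d : ℕ} {ι : Type} [Fintype ι] [Nonempty ι]
    (a b : ι → EuclideanSpace ℝ (Fin d)) (τ : ℝ) (hτ : 0 ≤ τ)
    (hab : ∀ i, ‖a i - b i‖ ≤ τ) (x : EuclideanSpace ℝ (Fin d))
    (hx : ∀ w, ‖w - x‖ ≤ τ → w ∈ convexHull ℝ (Set.range a)) :
    x ∈ convexHull ℝ (Set.range b) := by
  by_contra hcon
  obtain ⟨f, u, hfb, hfx⟩ := geometric_hahn_banach_closed_point
    (convex_convexHull ℝ _) ((Set.finite_range b).isClosed_convexHull (𝕜 := ℝ)) hcon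
  have hfb' : ∀ i, f (b i) < u := fun i =>
    hfb _ (subset_convexHull ℝ _ (Set.mem_range_self i))
  have hf0 : f ≠ 0 := by
    intro h
    have h1 := hfb' (Classical.arbitrary ι)
    rw [h] at h1 hfx
    simp at h1 hfx
    linarith
  set v := (InnerProductSpace.toDual ℝ (EuclideanSpace ℝ (Fin d))).symm f with hv
  have hfv : ∀ w, f w = (inner ℝ v w : ℝ) := fun w => (InnerProductSpace.toDual_symm_apply).symm
  have hvn : ‖v‖ = ‖f‖ := LinearIsometryEquiv.norm_map _ f
  have hvpos : 0 < ‖v‖ := by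
    rw [hvn, norm_pos_iff]; exact hf0
  set w := x + (τ / ‖v‖) • v with hw
  have hwx : ‖w - x‖ ≤ τ := by
    rw [hw]
    simp only [add_sub_cancel_left, norm_smul, Real.norm_eq_abs,
      abs_of_nonneg (div_nonneg hτ hvpos.le)]
    rw [div_mul_cancel₀ _ hvpos.ne']
  have hmem := hx w hwx
  have hsub : convexHull ℝ (Set.range a) ⊆ {p | f p ≤ u + ‖f‖ * τ} := by
    apply convexHull_min
    · rintro _ ⟨i, rfl⟩
      have h1 : f (a i) = f (b i) + f (a i - b i) := by rw [map_sub]; ring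
      have h2 : f (a i - b i) ≤ ‖f‖ * τ := by
        calc f (a i - b i) ≤ ‖f (a i - b i)‖ := le_abs_self _
        _ ≤ ‖f‖ * ‖a i - b i‖ := f.le_opNorm _
        _ ≤ ‖f‖ * τ := by gcongr; exact hab i
      have := hfb' i
      simp only [Set.mem_setOf_eq]; linarith
    · exact convex_halfSpace_le (IsLinearMap.mk (map_add f) (map_smul f)) _
  have hle := hsub hmem
  simp only [Set.mem_setOf_eq] at hle
  have hfw : f w = f x + τ * ‖f‖ := by
    rw [hw, map_add, map_smul, smul_eq_mul, hfv v, real_inner_self_eq_norm_sq, ← hvn]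
    field_simp
  nlinarith [hvpos, hvn]

lemma hull_weights {E : Type*} [AddCommGroup E] [Module ℝ E] {n : ℕ}
    (b : Fin n → E) (x : E) (hx : x ∈ convexHull ℝ (Set.range b)) :
    ∃ q : Fin n → ℝ, (∀ i, 0 ≤ q i) ∧ ∑ i, q i = 1 ∧ ∑ i, q i • b i = x := by
  obtain ⟨κ, _, w, zz, hw0, hw1, hzz, hsum⟩ := mem_convexHull_iff_exists_fintype.1 hx
  choose σ hσ using hzz
  refine ⟨fun i => ∑ k ∈ univ.filter (fun k => σ k = i), w k, fun i => sum_nonneg fun k _ => hw0 k,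
    ?_, ?_⟩
  · rw [← hw1]
    exact Finset.sum_fiberwise _ _ _
  · rw [← hsum]
    have : ∀ i : Fin n, (∑ k ∈ univ.filter (fun k => σ k = i), w k) • b i
        = ∑ k ∈ univ.filter (fun k => σ k = i), w k • zz k := by
      intro i
      rw [Finset.sum_smul]
      apply Finset.sum_congr rfl
      intro k hk
      rw [mem_filter] at hk
      rw [← hσ k, hk.2]
    rw [Finset.sum_congr rfl fun i _ => this i]
    exact Finset.sum_fiberwise _ _ _

lemma mem_hull_explicit {d : ℕ} (hd : 1 ≤ d) (h w : EuclideanSpace ℝ (Fin d)) (s : ℝ)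
    (hs0 : 0 ≤ s) (hsh : s * h ⟨0, hd⟩ = w ⟨0, hd⟩)
    (hv : ∀ j : Fin d, (j : ℕ) ≠ 0 → 0 ≤ w j - s * h j)
    (hsv : s + ∑ j ∈ univ.erase ⟨0, hd⟩, (w j - s * h j) ≤ 1) :
    w ∈ convexHull ℝ (Set.range (fun i : Fin (d + 1) =>
      if (i : ℕ) = 1 then h else eVec d i)) := by
  set j0 : Fin d := ⟨0, hd⟩ with hj0def
  set A : Fin (d + 1) → EuclideanSpace ℝ (Fin d) :=
    fun i => if (i : ℕ) = 1 then h else eVec d i with hAdef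
  set v : Fin d → ℝ := fun j => w j - s * h j with hvdef
  set W : Fin (d + 1) → ℝ := fun i =>
    if (i : ℕ) = 0 then 1 - s - ∑ j ∈ univ.erase j0, v j
    else if (i : ℕ) = 1 then s
    else v ⟨(i : ℕ) - 1, by have := i.isLt; omega⟩ with hWdef
  have hWsucc : ∀ i : Fin d, W i.succ = if (i : ℕ) = 0 then s else v i := by
    intro i
    show (if ((i:ℕ) + 1) = 0 then _ else if ((i:ℕ) + 1) = 1 then s else
      v ⟨(i:ℕ) + 1 - 1, _⟩) = _
    rw [if_neg (Nat.succ_ne_zero _)]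
    by_cases h0 : (i : ℕ) = 0
    · rw [if_pos (by omega), if_pos h0]
    · rw [if_neg (by omega), if_neg h0]
      have hidx : (⟨(i:ℕ) + 1 - 1, by have := i.isLt; omega⟩ : Fin d) = i := Fin.ext (by simp)
      rw [hidx]
  have hW00 : W 0 = 1 - s - ∑ j ∈ univ.erase j0, v j := by
    show (if (0:ℕ) = 0 then _ else _) = _
    rw [if_pos rfl]
  have herase : ∀ j : Fin d, j ∈ univ.erase j0 ↔ (j : ℕ) ≠ 0 := by
    intro j
    rw [Finset.mem_erase]
    constructor
    · rintro ⟨h1, -⟩ hc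
      exact h1 (Fin.ext (by rw [hc]))
    · intro h1
      exact ⟨fun hc => h1 (by rw [hc]), mem_univ _⟩
  have hsplit : ∀ f : Fin d → ℝ, ∑ i, f i = f j0 + ∑ j ∈ univ.erase j0, f j :=
    fun f => (Finset.add_sum_erase _ f (mem_univ j0)).symm
  have hW0 : ∀ i, 0 ≤ W i := by
    intro i
    rcases Fin.eq_zero_or_eq_succ i with h0 | ⟨i', rfl⟩
    · rw [h0, hW00]; linarith
    · rw [hWsucc i']
      by_cases h0 : (i' : ℕ) = 0
      · rw [if_pos h0]; exact hs0
      · rw [if_neg h0]; exact hv i' h0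
  have hW1 : ∑ i, W i = 1 := by
    rw [Fin.sum_univ_succ, hW00, Finset.sum_congr rfl fun i _ => hWsucc i, hsplit]
    rw [if_pos (show ((j0:ℕ) = 0) from rfl)]
    rw [Finset.sum_congr rfl (fun j hj => if_neg ((herase j).1 hj))]
    ring
  have hWA : ∑ i, W i • A i = w := by
    ext j
    have hco : (∑ i, W i • A i) j = ∑ i, (W i • A i) j := by rw [WithLp.ofLp_sum]; exact Finset.sum_apply j univ _
    rw [hco, Fin.sum_univ_succ]
    have hA0 : (W 0 • A 0) j = 0 := by
      have h1 : A 0 = eVec d 0 := by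
        show (if ((0 : Fin (d+1)):ℕ) = 1 then h else eVec d ((0 : Fin (d+1)):ℕ)) = _
        norm_num
      have h2 : eVec d 0 j = 0 := by
        show (if (j : ℕ) + 1 = 0 then (1:ℝ) else 0) = 0
        rw [if_neg (Nat.succ_ne_zero _)]
      show W 0 * A 0 j = 0
      rw [h1, h2, mul_zero]
    rw [hA0]
    have hterm : ∀ i : Fin d, (W i.succ • A i.succ) j
        = if (i : ℕ) = 0 then s * h j else (if i = j then v i else 0) := by
      intro i
      have hAsucc : A i.succ j = if (i : ℕ) = 0 then h j else (if j = i then (1:ℝ) else 0) := by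
        show (if ((i:ℕ)+1) = 1 then h else eVec d ((i:ℕ)+1)) j = _
        by_cases h0 : (i : ℕ) = 0
        · rw [if_pos (by omega), if_pos h0]
        · rw [if_neg (by omega), if_neg h0]
          show (if (j:ℕ) + 1 = (i:ℕ) + 1 then (1:ℝ) else 0) = _
          by_cases hji : j = i
          · rw [if_pos (by rw [hji]), if_pos hji]
          · rw [if_neg (fun hc => hji (Fin.ext (by omega))), if_neg hji]
      show W i.succ * A i.succ j = _
      rw [hWsucc i, hAsucc]
      by_cases h0 : (i : ℕ) = 0
      · rw [if_pos h0, if_pos h0, if_pos h0]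
      · rw [if_neg h0, if_neg h0, if_neg h0]
        by_cases hji : i = j
        · rw [if_pos (by rw [hji]), if_pos hji, mul_one]
        · rw [if_neg (fun hc => hji hc.symm), if_neg hji, mul_zero]
    rw [Finset.sum_congr rfl fun i _ => hterm i, hsplit]
    rw [if_pos (show ((j0:ℕ) = 0) from rfl)]
    rw [Finset.sum_congr rfl (fun i hi => if_neg ((herase i).1 hi))]
    rw [Finset.sum_ite_eq' _ _ _]
    by_cases hj : j = j0
    · rw [if_neg (by rw [hj]; simp), hj, hsh]; ring
    · rw [if_pos ((herase j).2 (fun hc => hj (Fin.ext (by rw [hc]))))]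
      show 0 + (s * h j + (w j - s * h j)) = w j
      ring
  exact mem_convexHull_of_exists_fintype W A hW0 hW1 (fun i => Set.mem_range_self i) hWA

end LuoLimAux

open LuoLimAux

set_option maxHeartbeats 1000000 in
/-- **Step 3 in the proof of Theorem 3** (Lemma 1 of Luo and Lim 2016): there exists
`τ* > 0` such that for every `0 ≤ τ ≤ τ*`, every `y ∈ A_{d+1}` and every choice of
`zᵢ ∈ Aᵢ` for `0 ≤ i ≤ d`, there are nonnegative weights `p₀, …, p_d` summing to one with
`Σᵢ pᵢ zᵢ = y` and `p₁ ≥ 1/(16d)`. -/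
theorem convex_combination_lemma_A
    (d : ℕ) (hd : 1 ≤ d) :
    ∃ τstar > (0 : ℝ), ∀ τ : ℝ, 0 ≤ τ → τ ≤ τstar →
      ∀ y ∈ Aset d τ (d + 1), ∀ z : ℕ → EuclideanSpace ℝ (Fin d),
        (∀ i ≤ d, z i ∈ Aset d τ i) →
        ∃ p : ℕ → ℝ, (∀ i ≤ d, 0 ≤ p i) ∧
          (∑ i ∈ Finset.range (d + 1), p i = 1) ∧
          (∑ i ∈ Finset.range (d + 1), p i • z i = y) ∧
          1 / (16 * d) ≤ p 1 := by
  obtain ⟨D, hDdef⟩ : ∃ D : ℝ, D = (d : ℝ) := ⟨_, rfl⟩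
  have hD : 1 ≤ D := by rw [hDdef]; exact_mod_cast hd
  have hDpos : 0 < D := by linarith
  obtain ⟨ε, hεdef⟩ : ∃ ε : ℝ, ε = 1 / D := ⟨_, rfl⟩
  have hε : 0 < ε := by rw [hεdef]; exact one_div_pos.2 hDpos
  have hε1 : ε ≤ 1 := by rw [hεdef]; rw [div_le_one hDpos]; exact hD
  have hDε : D * ε = 1 := by rw [hεdef]; field_simp
  have hτs : (0:ℝ) < 1 / (64 * D ^ 2) := by
    apply one_div_pos.2; nlinarith
  refine ⟨1 / (64 * D ^ 2), hτs, ?_⟩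
  intro τ hτ0 hττ y hy z hz
  have hτε : τ ≤ ε ^ 2 / 64 := by
    have he : ε ^ 2 / 64 = 1 / (64 * D ^ 2) := by rw [hεdef]; field_simp
    rw [he]; exact hττ
  have hτe : τ ≤ ε / 64 := ar_tau ε τ hε hε1 hτε
  -- decode hypotheses
  have hd1 : d + 1 ≠ 1 := by omega
  rw [Aset, if_neg hd1, if_pos rfl] at hy
  obtain ⟨hycube, hynorm⟩ := hy
  have hz1 := hz 1 hd
  rw [Aset, if_pos rfl] at hz1
  set j0 : Fin d := ⟨0, hd⟩ with hj0def
  set h : EuclideanSpace ℝ (Fin d) := z 1 with hhdef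
  have hh0 : 1 / 2 ≤ h j0 := hz1.2 j0 rfl
  have hhc : ∀ j, 0 ≤ h j ∧ h j ≤ 1 := fun j => ⟨(hz1.1 j).1, (hz1.1 j).2⟩
  obtain ⟨a, hadef⟩ : ∃ a : ℝ, a = ε / 8 := ⟨_, rfl⟩
  have ha0 : 0 < a := by rw [hadef]; linarith
  have ha1 : a ≤ 1 / 8 := by rw [hadef]; linarith
  have ha1' : (0:ℝ) < 1 - a := by linarith
  obtain ⟨u, hudef⟩ : ∃ u : EuclideanSpace ℝ (Fin d), u = (1 - a)⁻¹ • (y - a • h) := ⟨_, rfl⟩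
  have hu : ∀ j, (1 - ε / 8) * u j = y j - ε / 8 * h j := by
    intro j
    have h1 : u j = (1 - a)⁻¹ * (y j - a * h j) := by rw [hudef]; rfl
    rw [← hadef, h1, ← mul_assoc, mul_inv_cancel₀ ha1'.ne', one_mul]
  -- coordinates of y
  have hyc : ∀ j : Fin d, |y j - vstar d j| ≤ τ := fun j =>
    le_trans (abs_coord_le (y - vstar d) j) hynorm
  have hy0 : |y j0 - ε / 4| ≤ τ := by
    have h1 := hyc j0
    have h2 : vstar d j0 = ε / 4 := by
      show (if (0:ℕ) = 0 then 1 / (4 * (d:ℝ)) else 1 / d) = ε / 4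
      rw [if_pos rfl, ← hDdef, hεdef]
      field_simp
    rwa [h2] at h1
  have hyj : ∀ j : Fin d, j ≠ j0 → |y j - ε| ≤ τ := by
    intro j hj
    have hjne : (j : ℕ) ≠ 0 := fun hc => hj (Fin.ext (by simpa using hc))
    have h1 := hyc j
    have h2 : vstar d j = ε := by
      show (if (j:ℕ) = 0 then 1 / (4 * (d:ℝ)) else 1 / d) = ε
      rw [if_neg hjne, ← hDdef, hεdef]
    rwa [h2] at h1
  -- bounds on u
  have hkey0 := ar_key0 ε τ (y j0) (h j0) hε hy0 hh0 (hhc j0).2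
  have hu0lp := ar_lb (ε / 8) (ε / 8 - τ) (u j0) (by linarith) (by linarith) (by linarith)
    (by rw [hu j0]; exact hkey0.1)
  have hu0l : ε / 8 - τ ≤ u j0 := hu0lp.1
  have hu0pos : 0 ≤ u j0 := hu0lp.2
  have hu0u : u j0 ≤ ε / 4 + 2 * τ :=
    ar_u0u ε τ (u j0) hε hε1 hτ0 (by rw [hu j0]; exact hkey0.2) hu0pos
  have hujlp : ∀ j, j ≠ j0 → (7 / 8 * ε - τ ≤ u j ∧ 0 ≤ u j) := by
    intro j hj
    exact ar_lb (ε / 8) (7 / 8 * ε - τ) (u j) (by linarith) (by linarith) (by linarith)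
      (by rw [hu j]; exact (ar_keyj ε τ (y j) (h j) hε (hyj j hj) (hhc j).1 (hhc j).2).1)
  have hcard : (univ.erase j0).card = d - 1 := by
    rw [card_erase_of_mem (mem_univ _), card_univ, Fintype.card_fin]
  have hcardR : ((univ.erase j0).card : ℝ) = D - 1 := by
    rw [hcard, hDdef]
    push_cast [hd]
    ring
  have hUsum : ∑ j ∈ univ.erase j0, u j ≤ 1 - 3 / 4 * ε + 2 * D * τ := by
    refine ar_usum ε τ D _ (∑ j ∈ univ.erase j0, (y j - ε / 8 * h j)) hε hε1 hτ0 hD hDε ?_ ?_ ?_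
    · rw [Finset.mul_sum]
      exact Finset.sum_congr rfl fun j _ => hu j
    · have h2 : ∑ j ∈ univ.erase j0, (y j - ε / 8 * h j) ≤ ∑ j ∈ univ.erase j0, (ε + τ) :=
        Finset.sum_le_sum fun j hj =>
          (ar_keyj ε τ (y j) (h j) hε (hyj j (Finset.mem_erase.1 hj).1) (hhc j).1 (hhc j).2).2
      rw [Finset.sum_const, nsmul_eq_mul, hcardR] at h2
      exact h2
    · exact Finset.sum_nonneg fun j hj => (hujlp j (Finset.mem_erase.1 hj).1).2
  -- the families
  have hAB : ∀ i : Fin (d + 1),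
      ‖(if (i : ℕ) = 1 then h else eVec d i) - z i‖ ≤ τ := by
    intro i
    by_cases hi1 : (i : ℕ) = 1
    · rw [if_pos hi1, hi1, hhdef, sub_self, norm_zero]; exact hτ0
    · have hile : (i : ℕ) ≤ d := by have := i.isLt; omega
      have hi := hz i hile
      rw [Aset, if_neg hi1, if_neg (by omega)] at hi
      rw [if_neg hi1, ← norm_neg, neg_sub]
      exact hi.2
  have hball : ∀ w, ‖w - u‖ ≤ τ → w ∈ convexHull ℝ (Set.range (fun i : Fin (d + 1) =>
      if (i : ℕ) = 1 then h else eVec d i)) := by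
    intro w hw
    have hwj : ∀ j, u j - τ ≤ w j ∧ w j ≤ u j + τ := by
      intro j
      have h1 := abs_le.1 (le_trans (abs_coord_le (w - u) j) hw)
      have h2 : (w - u) j = w j - u j := rfl
      rw [h2] at h1
      exact ⟨by linarith [h1.1], by linarith [h1.2]⟩
    have hh0pos : 0 < h j0 := by linarith
    obtain ⟨s, hsdef⟩ : ∃ s : ℝ, s = w j0 / h j0 := ⟨_, rfl⟩
    have hsh : s * h j0 = w j0 := by rw [hsdef]; exact div_mul_cancel₀ _ hh0pos.ne'
    have hw0pos : 0 ≤ w j0 := by linarith [(hwj j0).1, hτe]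
    have hs0 : 0 ≤ s := by rw [hsdef]; exact div_nonneg hw0pos hh0pos.le
    have hsu : s ≤ ε / 2 + 6 * τ :=
      ar_su ε τ s (h j0) (w j0) hs0 hsh hh0 (by linarith [(hwj j0).2])
    have hv : ∀ j : Fin d, (j : ℕ) ≠ 0 → 0 ≤ w j - s * h j := by
      intro j hj
      have hjj : j ≠ j0 := fun hc => hj (by rw [hc])
      exact ar_v ε τ s (h j) (w j) (u j) hε hε1 hτ0 hτε (hwj j).1 (hujlp j hjj).1
        (hhc j).1 (hhc j).2 hs0 hsu
    have hsv : s + ∑ j ∈ univ.erase j0, (w j - s * h j) ≤ 1 := by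
      refine ar_sv ε τ D s _ (∑ j ∈ univ.erase j0, u j) hε hε1 hτ0 hτε hD hDε hsu ?_ hUsum
      have h1 : ∑ j ∈ univ.erase j0, (w j - s * h j) ≤ ∑ j ∈ univ.erase j0, (u j + τ) :=
        Finset.sum_le_sum fun j hj => by
          have := mul_nonneg hs0 (hhc j).1
          linarith [(hwj j).2]
      rw [Finset.sum_add_distrib, Finset.sum_const, nsmul_eq_mul, hcardR] at h1
      linarith
    exact mem_hull_explicit hd h w s hs0 hsh hv hsv
  have humem : u ∈ convexHull ℝ (Set.range (fun i : Fin (d + 1) => z i)) :=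
    hull_perturb _ _ τ hτ0 hAB u hball
  obtain ⟨q, hq0, hq1, hqsum⟩ := hull_weights _ u humem
  refine ⟨fun i => if hi : i < d + 1 then (if i = 1 then a else 0) + (1 - a) * q ⟨i, hi⟩ else 0,
    ?_, ?_, ?_, ?_⟩
  · intro i hi
    dsimp only
    rw [dif_pos (by omega)]
    have hqi := hq0 ⟨i, by omega⟩
    split_ifs <;> nlinarith [ha1'.le]
  · rw [← Fin.sum_univ_eq_sum_range]
    have hsimp : ∀ i : Fin (d + 1),
        (if hi : (i:ℕ) < d + 1 then (if (i:ℕ) = 1 then a else 0) + (1 - a) * q ⟨(i:ℕ), hi⟩ else 0)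
        = (if (i:ℕ) = 1 then a else 0) + (1 - a) * q i := by
      intro i
      rw [dif_pos i.isLt]
    rw [Finset.sum_congr rfl fun i _ => hsimp i, Finset.sum_add_distrib, ← Finset.mul_sum, hq1]
    have h1 : ∑ i : Fin (d + 1), (if (i:ℕ) = 1 then a else 0) = a := by
      have h2 : ∀ i : Fin (d + 1), (if (i:ℕ) = 1 then a else 0)
          = if i = (⟨1, by omega⟩ : Fin (d+1)) then a else 0 :=
        fun i => if_congr (by rw [Fin.ext_iff]) rfl rfl
      rw [Finset.sum_congr rfl fun i _ => h2 i, Finset.sum_ite_eq' _ _ _,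
        if_pos (mem_univ _)]
    rw [h1]; ring
  · rw [← Fin.sum_univ_eq_sum_range]
    have hsimp : ∀ i : Fin (d + 1),
        (if hi : (i:ℕ) < d + 1 then (if (i:ℕ) = 1 then a else 0) + (1 - a) * q ⟨(i:ℕ), hi⟩ else 0) • z i
        = (if (i:ℕ) = 1 then a else 0) • z (i:ℕ) + (1 - a) • (q i • z (i:ℕ)) := by
      intro i
      rw [dif_pos i.isLt, add_smul, smul_smul]
    rw [Finset.sum_congr rfl fun i _ => hsimp i, Finset.sum_add_distrib, ← Finset.smul_sum, hqsum]
    have h1 : ∑ i : Fin (d + 1), (if (i:ℕ) = 1 then a else 0) • z (i:ℕ) = a • z 1 := by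
      have h2 : ∀ i : Fin (d + 1), (if (i:ℕ) = 1 then a else 0) • z (i:ℕ)
          = if i = (⟨1, by omega⟩ : Fin (d+1)) then a • z ((i:ℕ)) else 0 := by
        intro i
        by_cases hi : (i:ℕ) = 1
        · rw [if_pos hi, if_pos (Fin.ext hi)]
        · rw [if_neg hi, if_neg (fun hc => hi (by rw [hc])), zero_smul]
      rw [Finset.sum_congr rfl fun i _ => h2 i, Finset.sum_ite_eq' _ _ _,
        if_pos (mem_univ _)]
    rw [h1]
    have h2 : (1 - a) • u = y - a • h := by
      rw [hudef, smul_inv_smul₀ ha1'.ne']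
    rw [h2, hhdef]
    abel
  · dsimp only
    rw [dif_pos (by omega), if_pos rfl]
    have hq := hq0 ⟨1, by omega⟩
    have h16 : 1 / (16 * D) ≤ a := by
      rw [hadef, hεdef]
      rw [div_le_div_iff₀ (by positivity) (by nlinarith)]
      nlinarith
    have h17 : a ≤ a + (1 - a) * q ⟨1, by omega⟩ := by nlinarith
    rw [hDdef] at h16
    linarith

end
end

section
/- Let x₁, x₂, … be i.i.d. random vectors taking values in [0,1]^d such that P(x₁ ∈ A) > 0 for every subset A of [0,1]^d with nonempty interior. Let λ > 0, let f₀: [0,1]^d → ℝ be λ-Lipschitz, and let (f_n)_{n≥1} be a sequence of (random) λ-Lipschitz functions from [0,1]^d to ℝ such that (1/n) Σ_{i=1}^n (f_n(x_i) − f₀(x_i))² → 0 as n → ∞ almost surely. Then sup_{x ∈ [0,1]^d} |f_n(x) − f₀(x)| → 0 as n → ∞ almost surely. -/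
open MeasureTheory ProbabilityTheory Filter Metric Topology Finset

noncomputable section

lemma unitCube_isClosed (d : ℕ) : IsClosed (unitCube d) := by
  have : unitCube d = ⋂ i, (fun x : EuclideanSpace ℝ (Fin d) => x i) ⁻¹' Set.Icc (0:ℝ) 1 := by
    ext x; simp [unitCube]
  rw [this]
  exact isClosed_iInter fun i =>
    IsClosed.preimage (EuclideanSpace.proj (𝕜 := ℝ) i).continuous isClosed_Icc

lemma unitCube_isCompact (d : ℕ) : IsCompact (unitCube d) := by
  apply Metric.isCompact_of_isClosed_isBounded (unitCube_isClosed d)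
  apply (Metric.isBounded_closedBall (x := (0 : EuclideanSpace ℝ (Fin d))) (r := Real.sqrt d)).subset
  intro x hx
  simp only [Metric.mem_closedBall, dist_zero_right]
  rw [EuclideanSpace.norm_eq]
  have : ∑ i, ‖x i‖ ^ 2 ≤ (d : ℝ) := by
    calc ∑ i, ‖x i‖ ^ 2 ≤ ∑ _i : Fin d, (1:ℝ) := by
          apply Finset.sum_le_sum
          intro i _
          have h := hx i
          have : |x i| ≤ 1 := abs_le.2 ⟨by linarith [h.1], h.2⟩
          calc ‖x i‖^2 = |x i|^2 := by rw [Real.norm_eq_abs]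
            _ ≤ 1^2 := by nlinarith [abs_nonneg (x i)]
            _ = 1 := one_pow 2
      _ = d := by simp
  calc Real.sqrt (∑ i, ‖x i‖^2) ≤ Real.sqrt d := Real.sqrt_le_sqrt this

lemma interior_ball_inter_unitCube {d : ℕ} {z : EuclideanSpace ℝ (Fin d)}
    (hz : z ∈ unitCube d) {δ : ℝ} (hδ : 0 < δ) :
    (interior (Metric.ball z δ ∩ unitCube d)).Nonempty := by
  set θ : ℝ := min (1/2) (δ / (Real.sqrt d + 1)) with hθdef
  have hsd : (0:ℝ) ≤ Real.sqrt d := Real.sqrt_nonneg _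
  have hθpos : 0 < θ := lt_min (by norm_num) (div_pos hδ (by linarith))
  have hθle : θ ≤ 1/2 := min_le_left _ _
  have hθle' : θ ≤ δ / (Real.sqrt d + 1) := min_le_right _ _
  set w : EuclideanSpace ℝ (Fin d) := WithLp.toLp 2 (fun i => (1 - θ) * z i + θ * (1/2)) with hwdef
  have hwIoo : ∀ i, w i ∈ Set.Ioo (0:ℝ) 1 := by
    intro i
    have h := hz i
    have hwi : w i = (1-θ) * z i + θ * (1/2) := rfl
    constructor
    · have h0 : (1-θ) * z i ≥ 0 := mul_nonneg (by linarith) h.1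
      rw [hwi]; nlinarith
    · rw [hwi]; nlinarith [h.2, mul_nonneg (sub_nonneg.2 hθle) (sub_nonneg.2 h.2)]
  have hsub : ∀ i, |w i - z i| ≤ θ / 2 := by
    intro i
    have h := hz i
    have : w i - z i = θ * (1/2 - z i) := by show (1 - θ) * z i + θ * (1/2) - z i = _; ring
    rw [this, abs_mul, abs_of_pos hθpos]
    have : |1/2 - z i| ≤ 1/2 := abs_le.2 ⟨by linarith [h.2], by linarith [h.1]⟩
    nlinarith
  have hnorm : ‖w - z‖ < δ := by
    rw [EuclideanSpace.norm_eq]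
    have h1 : ∑ i, ‖(w - z) i‖ ^ 2 ≤ (d : ℝ) * (θ/2)^2 := by
      calc ∑ i, ‖(w - z) i‖ ^ 2 ≤ ∑ _i : Fin d, (θ/2)^2 := by
            apply Finset.sum_le_sum
            intro i _
            have : (w - z) i = w i - z i := rfl
            rw [this, Real.norm_eq_abs]
            have := hsub i
            nlinarith [abs_nonneg (w i - z i)]
        _ = (d : ℝ) * (θ/2)^2 := by simp [mul_comm]
    have h2 : Real.sqrt (∑ i, ‖(w - z) i‖ ^ 2) ≤ Real.sqrt ((d:ℝ) * (θ/2)^2) :=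
      Real.sqrt_le_sqrt h1
    have h3 : Real.sqrt ((d:ℝ) * (θ/2)^2) = Real.sqrt d * (θ/2) := by
      rw [Real.sqrt_mul (Nat.cast_nonneg d), Real.sqrt_sq (by positivity)]
    have h4 : Real.sqrt d * (θ/2) < δ := by
      have : θ * (Real.sqrt d + 1) ≤ δ := by
        rw [← le_div_iff₀ (by linarith)] ; exact hθle'
      nlinarith
    calc Real.sqrt (∑ i, ‖(w - z) i‖ ^ 2) ≤ Real.sqrt d * (θ/2) := h2.trans_eq h3
      _ < δ := h4
  -- the open set
  set O : Set (EuclideanSpace ℝ (Fin d)) := {x | ∀ i, x i ∈ Set.Ioo (0:ℝ) 1} with hOdef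
  have hOopen : IsOpen O := by
    have : O = ⋂ i, (fun x : EuclideanSpace ℝ (Fin d) => x i) ⁻¹' Set.Ioo (0:ℝ) 1 := by
      ext x; simp [hOdef]
    rw [this]
    exact isOpen_iInter_of_finite fun i =>
      IsOpen.preimage (EuclideanSpace.proj (𝕜 := ℝ) i).continuous isOpen_Ioo
  have hOcube : O ⊆ unitCube d := fun x hx i => ⟨(hx i).1.le, (hx i).2.le⟩
  have hwO : w ∈ Metric.ball z δ ∩ O := by
    refine ⟨?_, hwIoo⟩
    rw [Metric.mem_ball, dist_eq_norm]
    exact hnorm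
  refine ⟨w, ?_⟩
  have : Metric.ball z δ ∩ O ⊆ interior (Metric.ball z δ ∩ unitCube d) := by
    apply IsOpen.subset_interior_iff (Metric.isOpen_ball.inter hOopen) |>.2
    exact Set.inter_subset_inter_right _ hOcube
  exact this hwO

lemma cover_lemma (d : ℕ) {δ : ℝ} (hδ : 0 < δ) :
    ∃ T : Finset (EuclideanSpace ℝ (Fin d)), (∀ z ∈ T, z ∈ unitCube d) ∧
      unitCube d ⊆ ⋃ z ∈ T, Metric.ball z δ := by
  obtain ⟨b', hb'sub, hb'fin, hcov⟩ := (unitCube_isCompact d).elim_finite_subcover_image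
    (b := unitCube d) (c := fun z => Metric.ball z δ)
    (fun z _ => Metric.isOpen_ball)
    (fun y hy => Set.mem_biUnion hy (Metric.mem_ball_self hδ))
  refine ⟨hb'fin.toFinset, ?_, ?_⟩
  · intro z hz; exact hb'sub (hb'fin.mem_toFinset.1 hz)
  · intro y hy
    have := hcov hy
    simpa [Set.Finite.mem_toFinset] using this

open Finset in
lemma key_index {n : ℕ} (hn : 0 < n) (P : ℕ → Prop) [DecidablePred P]
    (diff : ℕ → ℝ) {p ε2 : ℝ} (hp : 0 < p) (hε2 : 0 < ε2)
    (hcount : p/2 ≤ (∑ i ∈ range n, if P i then (1:ℝ) else 0) / n)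
    (hmse : (1/(n:ℝ)) * ∑ i ∈ range n, diff i ^ 2 < (p/2) * ε2^2) :
    ∃ i < n, P i ∧ |diff i| ≤ ε2 := by
  by_contra h
  push_neg at h
  have hbig : ∀ i ∈ (range n).filter P, ε2^2 ≤ diff i ^ 2 := by
    intro i hi
    simp only [mem_filter, mem_range] at hi
    have := h i hi.1 hi.2
    nlinarith [abs_nonneg (diff i), sq_abs (diff i)]
  have hcard : (((range n).filter P).card : ℝ) = ∑ i ∈ range n, if P i then (1:ℝ) else 0 := by
    rw [sum_boole]
  have hnpos : (0:ℝ) < n := by exact_mod_cast hn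
  have h1 : (p/2) * n ≤ (((range n).filter P).card : ℝ) := by
    rw [hcard]
    exact (le_div_iff₀ hnpos).1 hcount
  have h2 : (((range n).filter P).card : ℝ) * ε2^2 ≤ ∑ i ∈ (range n).filter P, diff i ^ 2 := by
    calc (((range n).filter P).card : ℝ) * ε2^2 = ∑ _i ∈ (range n).filter P, ε2^2 := by
          rw [sum_const, nsmul_eq_mul]
      _ ≤ ∑ i ∈ (range n).filter P, diff i ^ 2 := sum_le_sum hbig
  have h3 : ∑ i ∈ (range n).filter P, diff i ^ 2 ≤ ∑ i ∈ range n, diff i ^ 2 :=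
    sum_le_sum_of_subset_of_nonneg (filter_subset _ _) (fun i _ _ => sq_nonneg _)
  have h4 : (p/2) * ε2^2 * n ≤ ∑ i ∈ range n, diff i ^ 2 := by nlinarith [sq_nonneg ε2]
  rw [one_div, inv_mul_lt_iff₀ hnpos] at hmse
  nlinarith

open Finset in
lemma slln_indicator {Ω' : Type*} [MeasurableSpace Ω'] {μ : Measure Ω'} [IsProbabilityMeasure μ]
    {d : ℕ} (x : ℕ → Ω' → EuclideanSpace ℝ (Fin d))
    (hx_meas : ∀ n, Measurable (x n))
    (hx_indep : iIndepFun x μ)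
    (hx_ident : ∀ n, IdentDistrib (x n) (x 0) μ μ)
    {A : Set (EuclideanSpace ℝ (Fin d))} (hA : MeasurableSet A) :
    ∀ᵐ ω ∂μ, Tendsto
      (fun n : ℕ => (∑ i ∈ range n, Set.indicator A (fun _ => (1:ℝ)) (x i ω)) / n)
      atTop (𝓝 ((μ (x 0 ⁻¹' A)).toReal)) := by
  set g : EuclideanSpace ℝ (Fin d) → ℝ := Set.indicator A (fun _ => (1:ℝ)) with hg_def
  have hg : Measurable g := measurable_const.indicator hA
  set Y : ℕ → Ω' → ℝ := fun i => g ∘ x i with hY_def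
  have hY0 : Y 0 = (x 0 ⁻¹' A).indicator (fun _ => (1:ℝ)) := by
    funext ω
    by_cases h : x 0 ω ∈ A <;>
      simp [hY_def, hg_def, Set.indicator_apply, Set.mem_preimage, h, Function.comp]
  have hint : Integrable (Y 0) μ := by
    rw [hY0]
    exact (integrable_const (1:ℝ)).indicator (hx_meas 0 hA)
  have hindep : Pairwise (Function.onFun (IndepFun · · μ) Y) := fun i j hij =>
    (hx_indep.indepFun hij).comp hg hg
  have hident : ∀ i, IdentDistrib (Y i) (Y 0) μ μ := fun i => (hx_ident i).comp hg
  have hexp : μ[Y 0] = (μ (x 0 ⁻¹' A)).toReal := by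
    rw [hY0, integral_indicator_const (1:ℝ) (hx_meas 0 hA)]
    simp [Measure.real]
  have := strong_law_ae_real Y hint hindep hident
  rw [hexp] at this
  exact this

/-- **Step 13 in the proof of Theorem 3**: for uniformly `λ`-Lipschitz functions `fₙ` and a
`λ`-Lipschitz `f₀`, almost-sure convergence to zero of the empirical mean squared error
`(1/n) Σᵢ (fₙ(xᵢ) − f₀(xᵢ))²` along i.i.d. design points charging every subset of `[0,1]^d`
with nonempty interior implies almost-sure uniform convergence of `fₙ` to `f₀` on `[0,1]^d`. -/
theorem uniform_convergence_of_empirical_mse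
    {Ω' : Type*} [MeasurableSpace Ω'] {μ : Measure Ω'} [IsProbabilityMeasure μ]
    {d : ℕ}
    (x : ℕ → Ω' → EuclideanSpace ℝ (Fin d))
    (hx_meas : ∀ n, Measurable (x n))
    (hx_cube : ∀ n ω, x n ω ∈ unitCube d)
    (hx_indep : iIndepFun x μ)
    (hx_ident : ∀ n, IdentDistrib (x n) (x 0) μ μ)
    -- every subset of `[0,1]^d` with nonempty interior has positive probability
    (hpos : ∀ A : Set (EuclideanSpace ℝ (Fin d)), A ⊆ unitCube d →
      (interior A).Nonempty → 0 < μ (x 0 ⁻¹' A))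
    (lam : ℝ) (hlam : 0 < lam)
    (f₀ : EuclideanSpace ℝ (Fin d) → ℝ)
    (hf₀_lip : ∀ z ∈ unitCube d, ∀ w ∈ unitCube d, |f₀ z - f₀ w| ≤ lam * ‖z - w‖)
    (fn : ℕ → Ω' → EuclideanSpace ℝ (Fin d) → ℝ)
    (hfn_lip : ∀ n ω, ∀ z ∈ unitCube d, ∀ w ∈ unitCube d,
      |fn n ω z - fn n ω w| ≤ lam * ‖z - w‖)
    (hmse : ∀ᵐ ω ∂μ, Filter.Tendsto
      (fun n : ℕ => (1 / (n : ℝ)) * ∑ i : Fin n, (fn n ω (x i ω) - f₀ (x i ω)) ^ 2)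
      Filter.atTop (nhds 0)) :
    ∀ᵐ ω ∂μ, TendstoUniformlyOn (fun n => fn n ω) f₀ Filter.atTop (unitCube d) := by
  classical
  suffices H : ∀ k : ℕ, ∀ᵐ ω ∂μ, ∀ᶠ n in atTop, ∀ y ∈ unitCube d,
      |fn n ω y - f₀ y| ≤ 1/((k:ℝ)+1) by
    filter_upwards [ae_all_iff.2 H] with ω hω
    rw [Metric.tendstoUniformlyOn_iff]
    intro ε hε
    obtain ⟨k, hk⟩ := exists_nat_one_div_lt hε
    filter_upwards [hω k] with n hn y hy
    rw [Real.dist_eq, abs_sub_comm]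
    exact lt_of_le_of_lt (hn y hy) hk
  intro k
  set ε : ℝ := 1/((k:ℝ)+1) with hεdef
  have hε : 0 < ε := by positivity
  set δ : ℝ := ε/(8*lam) with hδdef
  have hδ : 0 < δ := by positivity
  obtain ⟨T, hTcube, hTcov⟩ := cover_lemma d hδ
  set A : EuclideanSpace ℝ (Fin d) → Set (EuclideanSpace ℝ (Fin d)) :=
    fun z => Metric.ball z δ ∩ unitCube d with hAdef
  have hAmeas : ∀ z, MeasurableSet (A z) :=
    fun z => measurableSet_ball.inter (unitCube_isClosed d).measurableSet
  set p : EuclideanSpace ℝ (Fin d) → ℝ := fun z => (μ (x 0 ⁻¹' A z)).toReal with hpdef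
  have hp : ∀ z ∈ T, 0 < p z := by
    intro z hz
    have h0 : 0 < μ (x 0 ⁻¹' A z) :=
      hpos (A z) Set.inter_subset_right (interior_ball_inter_unitCube (hTcube z hz) hδ)
    exact ENNReal.toReal_pos h0.ne' (measure_ne_top μ _)
  have Hslln : ∀ᵐ ω ∂μ, ∀ z ∈ (T : Set (EuclideanSpace ℝ (Fin d))), Tendsto
      (fun n : ℕ => (∑ i ∈ range n, Set.indicator (A z) (fun _ => (1:ℝ)) (x i ω)) / n)
      atTop (𝓝 (p z)) :=
    (ae_ball_iff T.countable_toSet).2 fun z _ =>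
      slln_indicator x hx_meas hx_indep hx_ident (hAmeas z)
  filter_upwards [hmse, Hslln] with ω hω1 hω2
  have h2 : ∀ z ∈ T, ∀ᶠ n : ℕ in atTop,
      p z / 2 ≤ (∑ i ∈ range n, Set.indicator (A z) (fun _ => (1:ℝ)) (x i ω)) / n :=
    fun z hz => (hω2 z hz).eventually (eventually_ge_nhds (by linarith [hp z hz]))
  have h3 : ∀ z ∈ T, ∀ᶠ n : ℕ in atTop,
      (1 / (n : ℝ)) * ∑ i : Fin n, (fn n ω (x i ω) - f₀ (x i ω)) ^ 2 < (p z / 2) * (ε/2)^2 :=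
    fun z hz => hω1.eventually (eventually_lt_nhds (by have := hp z hz; positivity))
  have hall : ∀ᶠ n : ℕ in atTop, ∀ z ∈ (T : Set (EuclideanSpace ℝ (Fin d))),
      (p z / 2 ≤ (∑ i ∈ range n, Set.indicator (A z) (fun _ => (1:ℝ)) (x i ω)) / n ∧
       (1 / (n : ℝ)) * ∑ i : Fin n, (fn n ω (x i ω) - f₀ (x i ω)) ^ 2 < (p z / 2) * (ε/2)^2) :=
    (eventually_all_finite T.finite_toSet).2 fun z hz => (h2 z hz).and (h3 z hz)
  filter_upwards [eventually_ge_atTop 1, hall] with n hn1 hn2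
  intro y hy
  obtain ⟨z, hzT, hyz⟩ := Set.mem_iUnion₂.1 (hTcov hy)
  obtain ⟨hcount, hmse_n⟩ := hn2 z hzT
  have hcount' : p z / 2 ≤ (∑ i ∈ range n, if x i ω ∈ A z then (1:ℝ) else 0) / n := by
    have : (∑ i ∈ range n, Set.indicator (A z) (fun _ => (1:ℝ)) (x i ω))
        = ∑ i ∈ range n, if x i ω ∈ A z then (1:ℝ) else 0 :=
      Finset.sum_congr rfl fun i _ => by simp [Set.indicator_apply]
    rwa [this] at hcount
  have hmse' : (1/(n:ℝ)) * ∑ i ∈ range n, (fn n ω (x i ω) - f₀ (x i ω)) ^ 2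
      < (p z / 2) * (ε/2)^2 := by
    rw [← Fin.sum_univ_eq_sum_range]
    exact hmse_n
  obtain ⟨i, hin, hiA, hidiff⟩ := key_index (Nat.lt_of_lt_of_le Nat.zero_lt_one hn1)
    (fun i => x i ω ∈ A z) (fun i => fn n ω (x i ω) - f₀ (x i ω))
    (hp z hzT) (by positivity : (0:ℝ) < ε/2) hcount' hmse'
  have hxi_cube := hx_cube i ω
  have hdist : ‖y - x i ω‖ ≤ 2 * δ := by
    rw [← dist_eq_norm]
    calc dist y (x i ω) ≤ dist y z + dist z (x i ω) := dist_triangle _ _ _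
      _ ≤ δ + δ := by
          have h1 : dist y z < δ := Metric.mem_ball.1 hyz
          have h2 : dist (x i ω) z < δ := Metric.mem_ball.1 hiA.1
          rw [dist_comm z (x i ω)]
          linarith
      _ = 2 * δ := by ring
  have e1 : |fn n ω y - fn n ω (x i ω)| ≤ lam * (2*δ) := by
    calc |fn n ω y - fn n ω (x i ω)| ≤ lam * ‖y - x i ω‖ :=
          hfn_lip n ω y hy (x i ω) hxi_cube
      _ ≤ lam * (2*δ) := by nlinarith
  have e2 : |f₀ (x i ω) - f₀ y| ≤ lam * (2*δ) := by
    calc |f₀ (x i ω) - f₀ y| ≤ lam * ‖x i ω - y‖ :=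
          hf₀_lip (x i ω) hxi_cube y hy
      _ ≤ lam * (2*δ) := by rw [norm_sub_rev]; nlinarith
  have hδε : lam * (2*δ) = ε/4 := by
    rw [hδdef]; field_simp; ring
  calc |fn n ω y - f₀ y|
      ≤ |fn n ω y - fn n ω (x i ω)| + |fn n ω (x i ω) - f₀ y| := abs_sub_le _ _ _
    _ ≤ |fn n ω y - fn n ω (x i ω)| + (|fn n ω (x i ω) - f₀ (x i ω)| + |f₀ (x i ω) - f₀ y|) :=
        by linarith [abs_sub_le (fn n ω (x i ω)) (f₀ (x i ω)) (f₀ y)]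
    _ ≤ ε/4 + (ε/2 + ε/4) := by linarith [e1, e2, hidiff, hδε.symm.le]
    _ = ε := by ring


end
end
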